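/- Suppose r = n − 1 and n − 1 > m_1. Then S \ P_{n−1} = {a_{n−1} + μ·a_n + λ·a_{n+1} : μ ∈ ℕ and 0 ≤ λ ≤ d − 1}. -/

import Mathlib

/-!
Put `K = n - 1` and `M = m₁ + K d`. A sum of `s` generators `aᵢ` (`i ≤ n`) and `l` copies of
`a_{n+1}` is `(s m₁ + q d, e d + l M)` with `q + e = s K`, where `e = Σ (n - i)`. Only `a_{n-1}`
contributes `e = 1`, and for `K ≥ 3` every `e ≠ 1` in `[0, s K]` splits into `s` parts in
`[0, K] \ {1}`; so `P` is exactly the set of points having a representation with `e ≠ 1`.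
An element of `S \ P` therefore has `e = 1`, i.e. it is `a_{n-1} + μ aₙ + l a_{n+1}`.
If `l ≥ d`, the identity `m₁ · d = d · m₁` trades `m₁` units of `q` and `d` units of `l`
for `d` more generators, giving `e = 1 + m₁ + d K` and a point of `P`. If `l < d`, the
representation with `e = 1` is unique: the total degree `x₁ + x₂ = (s + l) M` fixes `s + l`,
and `gcd(m₁, d) = 1` forces any other `s'` to differ from `s` by a multiple of `d`.
-/

namespace ArithSeqCurve

def vec (m₁ d K s q e l : ℕ) : ℕ × ℕ :=
  (s * m₁ + q * d, e * d + l * (m₁ + K * d))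

section

variable {m₁ d K : ℕ}

theorem vec_add (s q e l s' q' e' l' : ℕ) :
    vec m₁ d K s q e l + vec m₁ d K s' q' e' l' =
      vec m₁ d K (s + s') (q + q') (e + e') (l + l') := by
  simp only [vec, Prod.mk_add_mk, Prod.mk.injEq]
  constructor <;> ring

theorem nsmul_vec (k s q e l : ℕ) :
    k • vec m₁ d K s q e l = vec m₁ d K (k * s) (k * q) (k * e) (k * l) := by
  simp only [vec, Prod.smul_mk, smul_eq_mul, Prod.mk.injEq]
  constructor <;> ring

theorem vec_trade (s q e l : ℕ) :
    vec m₁ d K s (q + m₁) e (l + d) = vec m₁ d K (s + d) q (e + m₁ + d * K) l := by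
  simp only [vec, Prod.mk.injEq]
  constructor <;> ring

@[simp]
theorem vec_zero : vec m₁ d K 0 0 0 0 = 0 := by
  simp [vec]

def neOne : AddSubmonoid ℕ where
  carrier := {e | e ≠ 1}
  add_mem' {a b} ha hb := by simp only [Set.mem_ofPred_eq] at *; omega
  zero_mem' := zero_ne_one

variable (m₁ d K) in
def cone (E : AddSubmonoid ℕ) : AddSubmonoid (ℕ × ℕ) where
  carrier := {x | ∃ s q e l, q + e = s * K ∧ e ∈ E ∧ x = vec m₁ d K s q e l}
  add_mem' := by
    rintro _ _ ⟨s, q, e, l, hqe, he, rfl⟩ ⟨s', q', e', l', hqe', he', rfl⟩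
    exact ⟨s + s', q + q', e + e', l + l', by rw [add_mul]; omega, E.add_mem he he', vec_add ..⟩
  zero_mem' := ⟨0, 0, 0, 0, by simp, E.zero_mem, vec_zero.symm⟩

variable (m₁ d K) in
/-- `gen m₁ d K i` is `aᵢ` for `1 ≤ i ≤ n + 1`, where `n = K + 1`. -/
def gen (i : ℕ) : ℕ × ℕ :=
  if i = K + 2 then vec m₁ d K 0 0 0 1 else vec m₁ d K 1 (i - 1) (K + 1 - i) 0

theorem closure_gen_le_cone {A : Set ℕ} {E : AddSubmonoid ℕ} (hA : A ⊆ Set.Icc 1 (K + 2))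
    (hE : ∀ i ∈ A, i ≠ K + 2 → K + 1 - i ∈ E) :
    AddSubmonoid.closure (gen m₁ d K '' A) ≤ cone m₁ d K E := by
  rw [AddSubmonoid.closure_le]
  rintro _ ⟨i, hi, rfl⟩
  obtain ⟨hi1, hi2⟩ := hA hi
  unfold gen
  split_ifs with h
  · exact ⟨0, 0, 0, 1, by simp, E.zero_mem, rfl⟩
  · exact ⟨1, i - 1, K + 1 - i, 0, by omega, hE i hi h, rfl⟩

/-- One generator `a_{j+1} ≠ a_{n-1}` can be split off so that the rest still has `e ≠ 1`. -/
theorem exists_gen_step (hK : 3 ≤ K) {s q e : ℕ} (hqe : q + e = (s + 1) * K) (he : e ≠ 1) :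
    ∃ j ≤ K, j ≠ K - 1 ∧ j ≤ q ∧ K - j ≤ e ∧ (q - j) + (e - (K - j)) = s * K ∧
      e - (K - j) ≠ 1 := by
  have hsK : s * K = 0 ∨ K ≤ s * K := by
    rcases s with _ | s
    · simp
    · exact .inr (Nat.le_mul_of_pos_left K s.succ_pos)
  rw [add_one_mul] at hqe
  by_cases hq : K ≤ q
  · exact ⟨K, le_rfl, by omega, hq, by omega, by omega, by omega⟩
  by_cases hq' : q = K - 1
  · exact ⟨K - 2, by omega, by omega, by omega, by omega, by omega, by omega⟩
  · exact ⟨q, by omega, hq', le_rfl, by omega, by omega, by omega⟩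

theorem gen_of_le {j : ℕ} (hj : j ≤ K) : gen m₁ d K (j + 1) = vec m₁ d K 1 j (K - j) 0 := by
  rw [gen, if_neg (by omega)]
  congr 1; omega

theorem eqOn_gen {m : ℕ → ℕ} {a : ℕ → ℕ × ℕ} (hm : ∀ i, m i = m₁ + (i - 1) * d)
    (ha : ∀ i, a i = if i = K + 1 + 1 then (0, m (K + 1)) else (m i, m (K + 1) - m i)) :
    Set.EqOn a (gen m₁ d K) (Set.Icc 1 (K + 2)) := by
  rintro i ⟨hi1, hi2⟩
  rw [ha, gen, hm, hm, Nat.add_sub_cancel]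
  split_ifs with h
  · simp [vec]
  · have hKd : K * d = (i - 1) * d + (K + 1 - i) * d := by rw [← add_mul]; congr 1; omega
    simp only [vec, Prod.mk.injEq]
    constructor <;> omega

theorem vec_mem_closure_gen (hK : 3 ≤ K) {s q e : ℕ} (hqe : q + e = s * K) (he : e ≠ 1)
    (l : ℕ) :
    vec m₁ d K s q e l ∈ AddSubmonoid.closure (gen m₁ d K '' (Set.Icc 1 (K + 2) \ {K})) := by
  set P := AddSubmonoid.closure (gen m₁ d K '' (Set.Icc 1 (K + 2) \ {K}))
  have gen_mem {i : ℕ} (h1 : 1 ≤ i) (h2 : i ≤ K + 2) (hK : i ≠ K) : gen m₁ d K i ∈ P :=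
    AddSubmonoid.subset_closure ⟨i, ⟨⟨h1, h2⟩, hK⟩, rfl⟩
  have hl : vec m₁ d K s q e l = vec m₁ d K s q e 0 + l • gen m₁ d K (K + 2) := by
    rw [gen, if_pos rfl, nsmul_vec, vec_add]
    simp
  rw [hl]; clear hl
  refine P.add_mem ?_ (P.nsmul_mem (gen_mem (by omega) le_rfl (by omega)) l)
  induction s generalizing q e with
  | zero =>
    obtain ⟨rfl, rfl⟩ : q = 0 ∧ e = 0 := by simpa using hqe
    simp
  | succ s ih =>
    obtain ⟨j, hjK, hj, hjq, hje, hqe', he'⟩ := exists_gen_step hK hqe he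
    have hsplit : vec m₁ d K (s + 1) q e 0 =
        gen m₁ d K (j + 1) + vec m₁ d K s (q - j) (e - (K - j)) 0 := by
      rw [gen_of_le hjK, vec_add]
      congr 1 <;> omega
    rw [hsplit]
    exact P.add_mem (gen_mem (by omega) (by omega) (by omega)) (ih hqe' he')

theorem closure_gen_sdiff_eq_cone (hK : 3 ≤ K) :
    AddSubmonoid.closure (gen m₁ d K '' (Set.Icc 1 (K + 2) \ {K})) = cone m₁ d K neOne := by
  refine le_antisymm (closure_gen_le_cone Set.sdiff_subset fun i hi hi' ↦ ?_) ?_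
  · obtain ⟨⟨hi1, -⟩, hiK : i ≠ K⟩ := hi
    change K + 1 - i ≠ 1
    omega
  · rintro _ ⟨s, q, e, l, hqe, he, rfl⟩
    exact vec_mem_closure_gen hK hqe he l

theorem vec_fst_add_snd {s q e : ℕ} (hqe : q + e = s * K) (l : ℕ) :
    (vec m₁ d K s q e l).1 + (vec m₁ d K s q e l).2 = (s + l) * (m₁ + K * d) :=
  calc s * m₁ + q * d + (e * d + l * (m₁ + K * d))
      = s * m₁ + (q + e) * d + l * (m₁ + K * d) := by ring
    _ = (s + l) * (m₁ + K * d) := by rw [hqe]; ring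

theorem vec_inj_of_lt (hcop : Nat.Coprime m₁ d) {s q e l s' q' e' l' : ℕ}
    (hqe : q + e = s * K) (hqe' : q' + e' = s' * K) (hl : l < d) (he : e < d * K)
    (h : vec m₁ d K s q e l = vec m₁ d K s' q' e' l') :
    s = s' ∧ q = q' ∧ e = e' ∧ l = l' := by
  have hd : 0 < d := by omega
  have hK : 0 < K := Nat.pos_of_ne_zero (by rintro rfl; simp at he)
  have hfst : s * m₁ + q * d = s' * m₁ + q' * d := congrArg Prod.fst h
  have htot : s + l = s' + l' := by
    refine Nat.eq_of_mul_eq_mul_right (by positivity : 0 < m₁ + K * d) ?_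
    rw [← vec_fst_add_snd hqe, ← vec_fst_add_snd hqe', h]
  have hmod : s ≡ s' [MOD d] := by
    refine Nat.ModEq.cancel_right_of_coprime (Nat.coprime_comm.1 hcop) ?_
    calc s * m₁ % d = (s * m₁ + q * d) % d := (Nat.add_mul_mod_self_right ..).symm
      _ = (s' * m₁ + q' * d) % d := by rw [hfst]
      _ = s' * m₁ % d := Nat.add_mul_mod_self_right ..
  rcases lt_trichotomy s s' with hss | rfl | hss
  · have := Nat.le_of_dvd (by omega) ((Nat.modEq_iff_dvd' hss.le).1 hmod)
    omega
  · have hq : q = q' := Nat.eq_of_mul_eq_mul_right hd (by omega)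
    omega
  · have := Nat.le_of_dvd (by omega) ((Nat.modEq_iff_dvd' hss.le).1 hmod.symm)
    have hdK : (s' + d) * K ≤ s * K := Nat.mul_le_mul_right K (by omega)
    have hq : q ≤ q' := Nat.le_of_mul_le_mul_right (by nlinarith) hd
    rw [add_mul] at hdK
    omega

theorem gen_add_nsmul_gen_add_nsmul_gen (hK : 1 ≤ K) (μ l : ℕ) :
    gen m₁ d K K + μ • gen m₁ d K (K + 1) + l • gen m₁ d K (K + 2) =
      vec m₁ d K (μ + 1) (μ * K + (K - 1)) 1 l := by
  obtain ⟨k, rfl⟩ : ∃ k, K = k + 1 := ⟨K - 1, by omega⟩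
  rw [gen_of_le k.le_succ, gen_of_le le_rfl, gen, if_pos rfl, nsmul_vec, nsmul_vec, vec_add,
    vec_add]
  congr 1 <;> simp <;> ring

theorem closure_gen_sdiff (hK : 3 ≤ K) (hm₁ : 0 < m₁) (hm₁K : m₁ < K)
    (hcop : Nat.Coprime m₁ d) :
    (AddSubmonoid.closure (gen m₁ d K '' Set.Icc 1 (K + 2)) : Set (ℕ × ℕ)) \
        AddSubmonoid.closure (gen m₁ d K '' (Set.Icc 1 (K + 2) \ {K})) =
      {x | ∃ μ l : ℕ, l < d ∧
        x = gen m₁ d K K + μ • gen m₁ d K (K + 1) + l • gen m₁ d K (K + 2)} := by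
  set S := AddSubmonoid.closure (gen m₁ d K '' Set.Icc 1 (K + 2))
  rw [closure_gen_sdiff_eq_cone hK]
  ext x
  constructor
  · rintro ⟨hxS, hxP⟩
    obtain ⟨s, q, e, l, hqe, -, rfl⟩ :=
      closure_gen_le_cone (E := ⊤) subset_rfl (fun _ _ _ ↦ AddSubmonoid.mem_top _) hxS
    obtain rfl : e = 1 := by
      by_contra he
      exact hxP ⟨s, q, e, l, hqe, he, rfl⟩
    obtain ⟨μ, rfl⟩ : ∃ μ, s = μ + 1 :=
      Nat.exists_eq_add_one.2 (Nat.pos_of_ne_zero (by rintro rfl; omega))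
    rw [add_one_mul] at hqe
    have hl : l < d := by
      by_contra hl
      obtain ⟨q, rfl⟩ : ∃ q', q = q' + m₁ := ⟨q - m₁, by omega⟩
      obtain ⟨l, rfl⟩ : ∃ l', l = l' + d := ⟨l - d, by omega⟩
      rw [vec_trade] at hxP
      exact hxP ⟨μ + 1 + d, q, 1 + m₁ + d * K, l, by rw [add_mul, add_one_mul]; omega,
        show 1 + m₁ + d * K ≠ 1 by omega, rfl⟩
    refine ⟨μ, l, hl, ?_⟩
    rw [gen_add_nsmul_gen_add_nsmul_gen (by omega)]
    congr 1; omega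
  · rintro ⟨μ, l, hl, rfl⟩
    have gen_mem {i : ℕ} (h1 : 1 ≤ i) (h2 : i ≤ K + 2) : gen m₁ d K i ∈ S :=
      AddSubmonoid.subset_closure ⟨i, ⟨h1, h2⟩, rfl⟩
    refine ⟨S.add_mem (S.add_mem (gen_mem (by omega) (by omega))
      (S.nsmul_mem (gen_mem (by omega) (by omega)) μ))
      (S.nsmul_mem (gen_mem (by omega) le_rfl) l), ?_⟩
    rw [SetLike.mem_coe, gen_add_nsmul_gen_add_nsmul_gen (by omega)]
    rintro ⟨s, q, e, l', hqe, he, h⟩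
    have hqe₀ : μ * K + (K - 1) + 1 = (μ + 1) * K := by rw [add_one_mul]; omega
    have hdK : 1 < d * K := by nlinarith
    exact he (vec_inj_of_lt hcop hqe₀ hqe hl hdK h).2.2.1.symm

end

end ArithSeqCurve

open ArithSeqCurve in
theorem stmt_13_general (n m₁ d : ℕ) (hn : 4 ≤ n) (hm₁ : 0 < m₁)
    (hgcd : Nat.gcd m₁ d = 1) (hnm : m₁ < n - 1)
    (m : ℕ → ℕ) (hm : ∀ i, m i = m₁ + (i - 1) * d)
    (a : ℕ → ℕ × ℕ)
    (ha : ∀ i, a i = if i = n + 1 then (0, m n) else (m i, m n - m i))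
    (S : AddSubmonoid (ℕ × ℕ))
    (hS : S = AddSubmonoid.closure (a '' Set.Icc 1 (n + 1)))
    (P : AddSubmonoid (ℕ × ℕ))
    (hP : P = AddSubmonoid.closure (a '' (Set.Icc 1 (n + 1) \ {n - 1}))) :
    (S : Set (ℕ × ℕ)) \ (P : Set (ℕ × ℕ)) =
      {x | ∃ μ lam : ℕ, lam < d ∧ x = a (n - 1) + μ • a n + lam • a (n + 1)} := by
  obtain ⟨K, rfl⟩ : ∃ K, n = K + 1 := ⟨n - 1, by omega⟩
  have hgen := eqOn_gen hm ha
  subst hS hP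
  simp only [Nat.add_sub_cancel] at hnm ⊢
  rw [hgen.image_eq, (hgen.mono Set.sdiff_subset).image_eq, hgen ⟨by omega, by omega⟩,
    hgen ⟨by omega, by omega⟩, hgen ⟨by omega, le_rfl⟩]
  exact closure_gen_sdiff (by omega) hm₁ hnm hgcd

/-- For the projective monomial curve associated to an arithmetic
sequence, if `r = n-1 > m_1`, then
`S \ P_{n-1} = {a_{n-1} + μ·a_n + λ·a_{n+1} : μ ∈ ℕ, 0 ≤ λ ≤ d-1}` (written with
`λ < d`). -/
theorem stmt_13 (n m₁ d : ℕ) (hn : 4 ≤ n) (hm₁ : 0 < m₁) (hd : 0 < d)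
    (hgcd : Nat.gcd m₁ d = 1) (hnm : m₁ < n - 1)
    (m : ℕ → ℕ) (hm : ∀ i, m i = m₁ + (i - 1) * d)
    (a : ℕ → ℕ × ℕ)
    (ha : ∀ i, a i = if i = n + 1 then (0, m n) else (m i, m n - m i))
    (S : AddSubmonoid (ℕ × ℕ))
    (hS : S = AddSubmonoid.closure (a '' Set.Icc 1 (n + 1)))
    (P : AddSubmonoid (ℕ × ℕ))
    (hP : P = AddSubmonoid.closure (a '' (Set.Icc 1 (n + 1) \ {n - 1}))) :
    (S : Set (ℕ × ℕ)) \ (P : Set (ℕ × ℕ)) =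
      {x | ∃ μ lam : ℕ, lam < d ∧ x = a (n - 1) + μ • a n + lam • a (n + 1)} :=
  stmt_13_general n m₁ d hn hm₁ hgcd hnm m hm a ha S hS P hP
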